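/- Let f : ℕ → ℂ be a bounded function with AE(f) = 0 and finite range. Then for every c in the range of f, the characteristic function χ_{f⁻¹({c})} of the level set f⁻¹({c}) = {n ∈ ℕ : f(n) = c} satisfies AE(χ_{f⁻¹({c})}) = 0. In particular, every bounded function with zero anqie entropy and finite range is a finite linear combination of {0,1}-valued functions with zero anqie entropy. -/

import Mathlib

open Filter Set Topology

namespace Anqie

variable {X : Type*} [TopologicalSpace X]

/-- `𝒰` is an open cover of `X`. -/
def IsOpenCover (𝒰 : Set (Set X)) : Prop :=
  (∀ U ∈ 𝒰, IsOpen U) ∧ ⋃₀ 𝒰 = Set.univ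

/-- The common refinement `𝒰 ∨ T⁻¹ 𝒰 ∨ ⋯ ∨ T^{-(n-1)} 𝒰`. -/
def iterJoin (T : X → X) (𝒰 : Set (Set X)) (n : ℕ) : Set (Set X) :=
  {V | ∃ u : Fin n → Set X, (∀ j, u j ∈ 𝒰) ∧ V = ⋂ j : Fin n, T^[(j : ℕ)] ⁻¹' u j}

/-- The minimal cardinality of a finite subcover of `𝒱` (junk value `0` if none exists). -/
noncomputable def coverNum (𝒱 : Set (Set X)) : ℕ :=
  sInf {k | ∃ F : Finset (Set X), (↑F : Set (Set X)) ⊆ 𝒱 ∧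
    ⋃₀ (↑F : Set (Set X)) = Set.univ ∧ F.card = k}

/-- The Adler–Konheim–McAndrew entropy of `T` relative to the open cover `𝒰`. -/
noncomputable def coverEntropy (T : X → X) (𝒰 : Set (Set X)) : EReal :=
  Filter.atTop.limsup fun n : ℕ =>
    ((Real.log (coverNum (iterJoin T 𝒰 n)) / n : ℝ) : EReal)

/-- The Adler–Konheim–McAndrew topological entropy of `T`, via open covers. -/
noncomputable def entropy (T : X → X) : EReal :=
  ⨆ 𝒰 ∈ {𝒰 : Set (Set X) | IsOpenCover 𝒰}, coverEntropy T 𝒰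

/-- The set of forward-orbit sequences of `f : ℕ → X` inside `X^ℕ`. -/
def orbitSet (f : ℕ → X) : Set (ℕ → X) :=
  {ω | ∃ n : ℕ, ∀ k : ℕ, ω k = f (n + k)}

/-- `X_f`, the closure of the set of orbit sequences in the product topology. -/
def orbitClosure (f : ℕ → X) : Set (ℕ → X) := closure (orbitSet f)

lemma shift_mem_orbitClosure (f : ℕ → X) {ω : ℕ → X} (hω : ω ∈ orbitClosure f) :
    (fun k => ω (k + 1)) ∈ orbitClosure f := by
  have hcont : Continuous fun ω : ℕ → X => fun k => ω (k + 1) :=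
    continuous_pi fun k => continuous_apply (k + 1)
  have hmaps : MapsTo (fun ω : ℕ → X => fun k => ω (k + 1)) (orbitSet f) (orbitSet f) := by
    rintro ω ⟨n, hn⟩
    refine ⟨n + 1, fun k => ?_⟩
    show ω (k + 1) = f (n + 1 + k)
    rw [hn (k + 1)]; congr 1; omega
  exact map_mem_closure hcont hω hmaps

/-- `B_f`, the left shift restricted to `X_f`. -/
def shiftOn (f : ℕ → X) : orbitClosure f → orbitClosure f :=
  fun ω => ⟨fun k => (ω : ℕ → X) (k + 1), shift_mem_orbitClosure f ω.2⟩

/-- The anqie entropy of a map `f : ℕ → X`: the AKM topological entropy of the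
left shift on `X_f`. -/
noncomputable def AE (f : ℕ → X) : EReal := entropy (shiftOn f)

end Anqie

/-! For `φ` the indicator of `{c}`, which is continuous on the finite (hence discrete) range of `f`,
the map `ω ↦ φ ∘ ω` is a continuous surjection from the compact space `X_f` onto `X_{φ ∘ f}`
intertwining the two shifts. Topological entropy cannot increase when passing to such a factor,
and it is never negative, so `AE (φ ∘ f) = 0`. -/

namespace Anqie

section Combinatorial

variable {X Y : Type*}

lemma coverNum_le_card {𝒱 : Set (Set X)} {F : Finset (Set X)} (hF : (↑F : Set (Set X)) ⊆ 𝒱)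
    (hcov : ⋃₀ (↑F : Set (Set X)) = univ) : coverNum 𝒱 ≤ F.card :=
  Nat.sInf_le ⟨F, hF, hcov, rfl⟩

lemma iterJoin_image_preimage_subset {π : X → Y} {T : X → X} {S : Y → Y}
    (h : Function.Semiconj π T S) (𝒰 : Set (Set Y)) (n : ℕ) :
    iterJoin T ((π ⁻¹' ·) '' 𝒰) n ⊆ (π ⁻¹' ·) '' iterJoin S 𝒰 n := by
  rintro _ ⟨u, hu, rfl⟩
  choose w hw hwu using hu
  refine ⟨_, ⟨w, hw, rfl⟩, ?_⟩
  simp only [preimage_iInter, ← hwu, ← preimage_comp, (h.iterate_right _).comp_eq]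

lemma coverEntropy_mono {S : Y → Y} {T : X → X} {𝒰 : Set (Set Y)} {𝒱 : Set (Set X)}
    (h : ∀ n, coverNum (iterJoin S 𝒰 n) ≤ coverNum (iterJoin T 𝒱 n)) :
    coverEntropy S 𝒰 ≤ coverEntropy T 𝒱 := by
  refine limsup_le_limsup (.of_forall fun n => EReal.coe_le_coe_iff.2 ?_)
  rcases (coverNum (iterJoin S 𝒰 n)).eq_zero_or_pos with h0 | hpos
  · rw [h0, Nat.cast_zero, Real.log_zero, zero_div]
    positivity
  · gcongr
    exact h n

lemma coverEntropy_nonneg (T : X → X) (𝒰 : Set (Set X)) : 0 ≤ coverEntropy T 𝒰 :=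
  le_limsup_of_frequently_le' (.of_forall fun n => EReal.coe_nonneg.2 (by positivity))

lemma image_comp_orbitSet (φ : X → Y) (f : ℕ → X) :
    (φ ∘ ·) '' orbitSet f = orbitSet (φ ∘ f) := by
  ext σ
  constructor
  · rintro ⟨ω, ⟨n, hn⟩, rfl⟩
    exact ⟨n, fun k => congrArg φ (hn k)⟩
  · rintro ⟨n, hn⟩
    exact ⟨fun k => f (n + k), ⟨n, fun _ => rfl⟩, funext fun k => (hn k).symm⟩

end Combinatorial

section Entropy

variable {X Y : Type*} [TopologicalSpace X]

lemma IsOpenCover.preimage [TopologicalSpace Y] {π : X → Y} (hπ : Continuous π)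
    {𝒰 : Set (Set Y)} (h : IsOpenCover 𝒰) : IsOpenCover ((π ⁻¹' ·) '' 𝒰) := by
  refine ⟨?_, eq_univ_of_forall fun x => ?_⟩
  · rintro _ ⟨U, hU, rfl⟩
    exact (h.1 U hU).preimage hπ
  · obtain ⟨U, hU, hxU⟩ := h.2.symm ▸ mem_univ (π x)
    exact ⟨π ⁻¹' U, mem_image_of_mem _ hU, hxU⟩

lemma IsOpenCover.iterJoin {T : X → X} (hT : Continuous T) {𝒰 : Set (Set X)}
    (h : IsOpenCover 𝒰) (n : ℕ) : IsOpenCover (iterJoin T 𝒰 n) := by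
  refine ⟨?_, eq_univ_of_forall fun x => ?_⟩
  · rintro _ ⟨u, hu, rfl⟩
    exact isOpen_iInter_of_finite fun j => (h.1 (u j) (hu j)).preimage (hT.iterate j)
  · have hcov (j : Fin n) : ∃ U ∈ 𝒰, T^[j] x ∈ U := mem_sUnion.1 (h.2 ▸ mem_univ (T^[j] x))
    choose u hu hxu using hcov
    exact ⟨_, ⟨u, hu, rfl⟩, mem_iInter.2 hxu⟩

lemma IsOpenCover.exists_finset_subcover [CompactSpace X] {𝒱 : Set (Set X)}
    (h : IsOpenCover 𝒱) :
    ∃ F : Finset (Set X), (↑F : Set (Set X)) ⊆ 𝒱 ∧ ⋃₀ (↑F : Set (Set X)) = univ := by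
  obtain ⟨𝒲, h𝒲𝒱, h𝒲, hcov⟩ := isCompact_univ.elim_finite_subcover_image (c := id) h.1
    (by simpa [← sUnion_eq_biUnion] using h.2.ge)
  refine ⟨h𝒲.toFinset, by simpa using h𝒲𝒱, eq_univ_of_univ_subset ?_⟩
  simpa [sUnion_eq_biUnion] using hcov

lemma IsOpenCover.exists_finset_card_eq_coverNum [CompactSpace X] {𝒱 : Set (Set X)}
    (h : IsOpenCover 𝒱) : ∃ F : Finset (Set X), (↑F : Set (Set X)) ⊆ 𝒱 ∧
      ⋃₀ (↑F : Set (Set X)) = univ ∧ F.card = coverNum 𝒱 := by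
  obtain ⟨F, hF, hcov⟩ := h.exists_finset_subcover
  exact Nat.sInf_mem (s := {k | ∃ F : Finset (Set X), (↑F : Set (Set X)) ⊆ 𝒱 ∧
    ⋃₀ (↑F : Set (Set X)) = univ ∧ F.card = k}) ⟨F.card, F, hF, hcov, rfl⟩

lemma coverNum_le_of_subset_image_preimage [CompactSpace X] {π : X → Y}
    (hπ : Function.Surjective π) {𝒱 : Set (Set Y)} {𝒲 : Set (Set X)} (h𝒲 : IsOpenCover 𝒲)
    (h𝒲𝒱 : 𝒲 ⊆ (π ⁻¹' ·) '' 𝒱) : coverNum 𝒱 ≤ coverNum 𝒲 := by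
  classical
  obtain ⟨F, hF𝒲, hFcov, hFcard⟩ := h𝒲.exists_finset_card_eq_coverNum
  obtain ⟨G, hG𝒱, rfl⟩ := Finset.subset_set_image_iff.1 (hF𝒲.trans h𝒲𝒱)
  have hcard : (G.image (π ⁻¹' ·)).card = G.card :=
    Finset.card_image_of_injective G (Set.preimage_injective.2 hπ)
  refine (coverNum_le_card hG𝒱 (eq_univ_of_forall fun y => ?_)).trans (hcard ▸ hFcard).le
  obtain ⟨x, rfl⟩ := hπ y
  obtain ⟨_, hV, hxV⟩ := hFcov.symm ▸ mem_univ x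
  obtain ⟨W, hW, rfl⟩ := Finset.mem_image.1 hV
  exact ⟨W, hW, hxV⟩

lemma coverEntropy_le_entropy (T : X → X) {𝒰 : Set (Set X)} (h : IsOpenCover 𝒰) :
    coverEntropy T 𝒰 ≤ entropy T :=
  le_iSup₂ (f := fun 𝒰 (_ : 𝒰 ∈ {𝒰 : Set (Set X) | IsOpenCover 𝒰}) => coverEntropy T 𝒰) 𝒰 h

lemma entropy_nonneg (T : X → X) : 0 ≤ entropy T :=
  (coverEntropy_nonneg T {univ}).trans <|
    coverEntropy_le_entropy T ⟨by simp, by simp⟩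

lemma entropy_le_of_semiconj [TopologicalSpace Y] [CompactSpace X] {π : X → Y}
    (hπc : Continuous π) (hπs : Function.Surjective π) {T : X → X} (hT : Continuous T) {S : Y → Y}
    (h : Function.Semiconj π T S) : entropy S ≤ entropy T :=
  iSup₂_le fun 𝒰 h𝒰 => (coverEntropy_mono fun n =>
      coverNum_le_of_subset_image_preimage hπs ((h𝒰.preimage hπc).iterJoin hT n)
        (iterJoin_image_preimage_subset h 𝒰 n)).trans
    (coverEntropy_le_entropy T (h𝒰.preimage hπc))

end Entropy

section Orbit

variable {X Y : Type*} [TopologicalSpace X] [TopologicalSpace Y]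

lemma continuous_shiftOn (f : ℕ → X) : Continuous (shiftOn f) := by
  apply Continuous.subtype_mk
  exact continuous_pi fun k => (continuous_apply (k + 1)).comp continuous_subtype_val

lemma orbitClosure_subset_pi (f : ℕ → X) :
    orbitClosure f ⊆ univ.pi fun _ => closure (range f) := by
  refine closure_minimal ?_ (isClosed_set_pi fun _ _ => isClosed_closure)
  rintro ω ⟨n, hn⟩ k -
  exact hn k ▸ subset_closure (mem_range_self _)

lemma isCompact_orbitClosure {f : ℕ → X} (h : IsCompact (closure (range f))) :
    IsCompact (orbitClosure f) :=
  (isCompact_univ_pi fun _ => h).of_isClosed_subset isClosed_closure (orbitClosure_subset_pi f)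

lemma continuousOn_comp_orbitClosure {f : ℕ → X} {φ : X → Y}
    (hφ : ContinuousOn φ (closure (range f))) :
    ContinuousOn (φ ∘ ·) (orbitClosure f) :=
  continuousOn_pi.2 fun k => hφ.comp (continuous_apply k).continuousOn
    fun _ hω => orbitClosure_subset_pi f hω k trivial

lemma image_comp_orbitClosure [T2Space Y] {f : ℕ → X} {φ : X → Y}
    (hK : IsCompact (closure (range f))) (hφ : ContinuousOn φ (closure (range f))) :
    (φ ∘ ·) '' orbitClosure f = orbitClosure (φ ∘ f) := by
  rw [orbitClosure, image_closure_of_isCompact (isCompact_orbitClosure hK)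
    (continuousOn_comp_orbitClosure hφ), image_comp_orbitSet, orbitClosure]

lemma AE_nonneg (f : ℕ → X) : 0 ≤ AE f :=
  entropy_nonneg _

lemma AE_comp_le [T2Space Y] {f : ℕ → X} {φ : X → Y} (hK : IsCompact (closure (range f)))
    (hφ : ContinuousOn φ (closure (range f))) : AE (φ ∘ f) ≤ AE f := by
  have himage := image_comp_orbitClosure hK hφ
  have := isCompact_iff_compactSpace.1 (isCompact_orbitClosure hK)
  let π : orbitClosure f → orbitClosure (φ ∘ f) :=
    fun ω => ⟨φ ∘ ω, himage ▸ mem_image_of_mem _ ω.2⟩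
  refine entropy_le_of_semiconj (π := π)
    ((continuousOn_comp_orbitClosure hφ).domRestrict.subtype_mk _) ?_ (continuous_shiftOn f)
    fun _ => rfl
  rintro ⟨σ, hσ⟩
  obtain ⟨ω, hω, rfl⟩ := himage ▸ hσ
  exact ⟨⟨ω, hω⟩, rfl⟩

end Orbit

lemma exists_fin_sum_mul_indicator_eq {α R : Type*} [NonAssocSemiring R] {f : α → R}
    (hf : (range f).Finite) :
    ∃ (k : ℕ) (c : Fin k → R), ∀ a, f a = ∑ i, c i * (f ⁻¹' {c i}).indicator (fun _ => 1) a := by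
  classical
  let e := hf.toFinset.equivFin.symm
  refine ⟨_, fun i => e i, fun a => ?_⟩
  rw [e.sum_comp fun x => (x : R) * (f ⁻¹' {(x : R)}).indicator (fun _ => 1) a,
    Finset.sum_coe_sort hf.toFinset fun x => x * (f ⁻¹' {x}).indicator (fun _ => 1) a]
  simp [indicator_apply, eq_comm]

end Anqie

/-- Let `f : ℕ → ℂ` have zero anqie entropy and finite range.
Then for every `c` in the range of `f`, the characteristic function of the level
set `f⁻¹({c})` has zero anqie entropy; in particular `f` is a finite linear
combination of `{0,1}`-valued functions with zero anqie entropy. -/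
theorem level_sets_of_zero_entropy_finite_range (f : ℕ → ℂ)
    (h0 : Anqie.AE f = 0) (hfin : (Set.range f).Finite) :
    (∀ c ∈ Set.range f, Anqie.AE ((f ⁻¹' {c}).indicator fun _ => (1 : ℂ)) = 0) ∧
    ∃ (k : ℕ) (c : Fin k → ℂ) (g : Fin k → ℕ → ℂ),
      (∀ i, Anqie.AE (g i) = 0) ∧ (∀ i n, g i n = 0 ∨ g i n = 1) ∧
      ∀ n, f n = ∑ i, c i * g i n := by
  have hclosure : closure (range f) = range f := hfin.isClosed.closure_eq
  have level (c : ℂ) : Anqie.AE ((f ⁻¹' {c}).indicator fun _ => (1 : ℂ)) = 0 := by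
    refine le_antisymm ?_ (Anqie.AE_nonneg _)
    rw [← h0]
    exact Anqie.AE_comp_le (φ := ({c} : Set ℂ).indicator fun _ => 1)
      (by rw [hclosure]; exact hfin.isCompact) (by rw [hclosure]; exact hfin.continuousOn _)
  obtain ⟨k, c, hf⟩ := Anqie.exists_fin_sum_mul_indicator_eq hfin
  refine ⟨fun c _ => level c, k, c, fun i => (f ⁻¹' {c i}).indicator fun _ => 1,
    fun i => level (c i), fun i n => ?_, hf⟩
  simpa using indicator_eq_zero_or_self (f ⁻¹' {c i}) (fun _ => (1 : ℂ)) n
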